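/- arXiv:0807.1036 — 2 statements merged into one kernel-verified Lean document; each statement's English description precedes it below -/
import Mathlib

section
/- Let (Ω, ℱ, ℙ) be a probability space, T > 0, and ω ↦ M_ω a measurable family of finite atomless Borel measures on [0,T] (a measure-valued kernel). Let q ∈ (0,1], s > 0 and C > 0 be such that ∫_Ω M_ω([x,y])^q ℙ(dω) ≤ C (y−x)^s for all 0 ≤ x ≤ y ≤ T. If K ⊆ [0,T] has Euclidean Hausdorff dimension strictly less than s, then ℙ-almost surely the Hausdorff dimension of K with respect to the pseudometric d_ω(x,y) = M_ω([min(x,y), max(x,y)]) is at most q. -/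
open MeasureTheory
open scoped ENNReal

/-- The `t`-dimensional Hausdorff content of `K` with respect to a pseudometric `d`:
the infimum of `∑ᵢ rᵢ^t` over countable covers of `K` by `d`-balls of radii `rᵢ > 0`. -/
noncomputable def hContentWith {X : Type*} (d : X → X → ℝ) (t : ℝ) (K : Set X) : ℝ≥0∞ :=
  ⨅ (c : ℕ → X) (r : ℕ → ℝ)
    (_ : (∀ n, 0 < r n) ∧ K ⊆ ⋃ n, {y | d (c n) y < r n}),
    ∑' n, ENNReal.ofReal (r n ^ t)

/-- The Hausdorff dimension of `K` with respect to a pseudometric `d`: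
`inf {t ≥ 0 : C^t(K) = 0}`. -/
noncomputable def dimWith {X : Type*} (d : X → X → ℝ) (K : Set X) : ℝ :=
  sInf {t : ℝ | 0 ≤ t ∧ hContentWith d t K = 0}

open Set
open scoped NNReal

/-! Since `dimH K < s`, the set `K` has zero `s`-dimensional Hausdorff measure, so for every
`ε > 0` it is covered by intervals `Iₙ = [xₙ, yₙ] ⊆ [0,T]` with `∑ |Iₙ|^s < ε`. Each `Iₙ` lies in
the closed `d_ω`-ball of radius `M_ω(Iₙ)` about `xₙ`, so the `q`-content of `K` for `d_ω` is at
most `∑ M_ω(Iₙ)^q`, a random variable whose expectation is at most `C ε` by the moment bound.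
Hence the `q`-content vanishes almost surely. -/

theorem dimWith_le_of_hContentWith_eq_zero {X : Type*} {d : X → X → ℝ} {K : Set X} {t : ℝ}
    (ht : 0 ≤ t) (h : hContentWith d t K = 0) : dimWith d K ≤ t :=
  csInf_le ⟨0, fun _ hu => hu.1⟩ ⟨ht, h⟩

theorem hContentWith_le_tsum_rpow {X : Type*} (d : X → X → ℝ) {t : ℝ} (ht₀ : 0 < t)
    (ht₁ : t ≤ 1) {K : Set X} (c : ℕ → X) (r : ℕ → ℝ) (hr : ∀ n, 0 ≤ r n)
    (hK : K ⊆ ⋃ n, {y | d (c n) y ≤ r n}) :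
    hContentWith d t K ≤ ∑' n, ENNReal.ofReal (r n) ^ t := by
  refine ENNReal.le_of_forall_pos_le_add fun ε hε _ => ?_
  obtain ⟨δ, hδ, hδε⟩ := ENNReal.exists_pos_sum_of_countable (ENNReal.coe_ne_zero.2 hε.ne') ℕ
  -- enlarge the radii by `ηₙ` with `∑ ηₙ^t < ε`; `x ↦ x^t` is subadditive since `t ≤ 1`
  set η : ℕ → ℝ≥0 := fun n => δ n ^ t⁻¹
  have hη : ∀ n, 0 < (η n : ℝ) := fun n => NNReal.rpow_pos (hδ n)
  have hηt : ∀ n, ENNReal.ofReal (η n) ^ t = δ n := fun n => by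
    rw [ENNReal.ofReal_coe_nnreal, ENNReal.coe_rpow_of_nonneg _ (inv_nonneg.2 ht₀.le),
      ENNReal.rpow_inv_rpow ht₀.ne']
  have hcover : K ⊆ ⋃ n, {y | d (c n) y < r n + η n} :=
    hK.trans <| iUnion_mono fun n _ hy => lt_add_of_le_of_pos hy (hη n)
  calc hContentWith d t K ≤ ∑' n, ENNReal.ofReal ((r n + η n) ^ t) :=
        iInf_le_of_le c <| iInf_le_of_le _ <|
          iInf_le_of_le ⟨fun n => add_pos_of_nonneg_of_pos (hr n) (hη n), hcover⟩ le_rfl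
    _ ≤ ∑' n, (ENNReal.ofReal (r n) ^ t + δ n) := ENNReal.tsum_le_tsum fun n => by
        rw [← ENNReal.ofReal_rpow_of_nonneg (add_nonneg (hr n) (hη n).le) ht₀.le,
          ENNReal.ofReal_add (hr n) (hη n).le, ← hηt n]
        exact ENNReal.rpow_add_le_add_rpow _ _ ht₀.le ht₁
    _ = ∑' n, ENNReal.ofReal (r n) ^ t + ∑' n, (δ n : ℝ≥0∞) := ENNReal.tsum_add
    _ ≤ ∑' n, ENNReal.ofReal (r n) ^ t + ε := by gcongr

noncomputable def measureDist (μ : Measure ℝ) (x y : ℝ) : ℝ :=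
  (μ (Icc (min x y) (max x y))).toReal

theorem measureDist_le_of_mem_Icc (μ : Measure ℝ) [IsFiniteMeasure μ]
    {x y z : ℝ} (hz : z ∈ Icc x y) : measureDist μ x z ≤ (μ (Icc x y)).toReal := by
  rw [measureDist, min_eq_left hz.1, max_eq_right hz.1]
  exact ENNReal.toReal_mono (measure_ne_top _ _)
    (measure_mono (Icc_subset_Icc_right hz.2))

theorem hContentWith_measureDist_le_tsum (μ : Measure ℝ)
    [IsFiniteMeasure μ] {q : ℝ} (hq₀ : 0 < q) (hq₁ : q ≤ 1) {K : Set ℝ}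
    (x y : ℕ → ℝ) (hK : K ⊆ ⋃ n, Icc (x n) (y n)) :
    hContentWith (measureDist μ) q K ≤ ∑' n, μ (Icc (x n) (y n)) ^ q := by
  have h := hContentWith_le_tsum_rpow (measureDist μ) hq₀ hq₁ x _ (fun _ => ENNReal.toReal_nonneg)
    (hK.trans <| iUnion_mono fun n _ hz => measureDist_le_of_mem_Icc μ hz)
  simpa only [ENNReal.ofReal_toReal (measure_ne_top μ _)] using h

theorem exists_Icc_subset_ofReal_sub_le_ediam {a b : ℝ} (hab : a ≤ b) {A : Set ℝ}
    (hA : A ⊆ Icc a b) :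
    ∃ x y, a ≤ x ∧ x ≤ y ∧ y ≤ b ∧ A ⊆ Icc x y ∧ ENNReal.ofReal (y - x) ≤ Metric.ediam A := by
  rcases A.eq_empty_or_nonempty with rfl | hne
  · exact ⟨a, a, le_rfl, le_rfl, hab, empty_subset _, by simp⟩
  have hbdd : Bornology.IsBounded A := Metric.isBounded_Icc a b |>.subset hA
  refine ⟨sInf A, sSup A, le_csInf hne fun z hz => (hA hz).1,
    Real.sInf_le_sSup A hbdd.bddBelow hbdd.bddAbove, csSup_le hne fun z hz => (hA hz).2,
    hbdd.subset_Icc_sInf_sSup, (Real.ediam_eq hbdd).ge⟩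

theorem exists_cover_tsum_ediam_rpow_lt {X : Type*} [EMetricSpace X] [MeasurableSpace X]
    [BorelSpace X] {s : ℝ} {K : Set X} (hK : μH[s] K = 0) {ε : ℝ≥0∞} (hε : ε ≠ 0) :
    ∃ t : ℕ → Set X, K ⊆ ⋃ n, t n ∧ ∑' n, ⨆ _ : (t n).Nonempty, Metric.ediam (t n) ^ s < ε := by
  have h := Measure.hausdorffMeasure_apply s K ▸ hK
  have h1 := ENNReal.iSup_eq_zero.1 (ENNReal.iSup_eq_zero.1 h 1) one_pos
  obtain ⟨t, hKt, -, ht⟩ := by simpa only [iInf_lt_iff] using h1.trans_lt (pos_iff_ne_zero.2 hε)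
  exact ⟨t, hKt, ht⟩

theorem exists_Icc_cover_tsum_rpow_lt {a b s : ℝ} (hab : a ≤ b) (hs : 0 < s) {K : Set ℝ}
    (hK : K ⊆ Icc a b) (hK₀ : μH[s] K = 0) {ε : ℝ≥0∞} (hε : ε ≠ 0) :
    ∃ x y : ℕ → ℝ, (∀ n, a ≤ x n ∧ x n ≤ y n ∧ y n ≤ b) ∧ K ⊆ ⋃ n, Icc (x n) (y n) ∧
      ∑' n, ENNReal.ofReal (y n - x n) ^ s < ε := by
  obtain ⟨t, hKt, ht⟩ := exists_cover_tsum_ediam_rpow_lt hK₀ hε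
  choose x y hax hxy hyb hsub hdiam using fun n =>
    exists_Icc_subset_ofReal_sub_le_ediam hab (inter_subset_right : t n ∩ Icc a b ⊆ Icc a b)
  refine ⟨x, y, fun n => ⟨hax n, hxy n, hyb n⟩, fun z hz => ?_, ht.trans_le' ?_⟩
  · obtain ⟨n, hn⟩ := mem_iUnion.1 (hKt hz)
    exact mem_iUnion.2 ⟨n, hsub n ⟨hn, hK hz⟩⟩
  refine ENNReal.tsum_le_tsum fun n => ?_
  rcases (t n).eq_empty_or_nonempty with hempty | hne
  · have h0 : ENNReal.ofReal (y n - x n) = 0 :=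
      nonpos_iff_eq_zero.1 <| (hdiam n).trans (by simp [hempty])
    rw [h0, ENNReal.zero_rpow_of_pos hs]
    exact bot_le
  · rw [ciSup_pos hne]
    exact ENNReal.rpow_le_rpow ((hdiam n).trans (Metric.ediam_mono inter_subset_left)) hs.le

theorem ae_eq_zero_of_forall_exists_le_lintegral_le {Ω : Type*} [MeasurableSpace Ω]
    {μ : Measure Ω} {f : Ω → ℝ≥0∞}
    (h : ∀ ε : ℝ≥0∞, ε ≠ 0 → ∃ g : Ω → ℝ≥0∞, Measurable g ∧ f ≤ g ∧ ∫⁻ ω, g ω ∂μ ≤ ε) :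
    ∀ᵐ ω ∂μ, f ω = 0 := by
  choose g hg hfg hgε using fun n : ℕ =>
    h (n : ℝ≥0∞)⁻¹ (ENNReal.inv_ne_zero.2 (ENNReal.natCast_ne_top n))
  have hint : ∫⁻ ω, ⨅ n, g n ω ∂μ = 0 := by
    by_contra hne
    obtain ⟨n, hn⟩ := ENNReal.exists_inv_nat_lt hne
    exact hn.not_ge ((lintegral_mono fun ω => iInf_le _ n).trans (hgε n))
  filter_upwards [(lintegral_eq_zero_iff (Measurable.iInf hg)).1 hint] with ω hω
  exact nonpos_iff_eq_zero.1 <| (le_iInf fun n => hfg n ω).trans hω.le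

theorem lintegral_tsum_rpow_measure_Icc_le {Ω : Type*} [MeasurableSpace Ω]
    (ℙ : Measure Ω) (M : Ω → Measure ℝ)
    (hmeas : ∀ A : Set ℝ, MeasurableSet A → Measurable fun ω => M ω A) {a b q s C : ℝ}
    (hmom : ∀ x y : ℝ, a ≤ x → x ≤ y → y ≤ b →
      ∫⁻ ω, (M ω (Icc x y)) ^ q ∂ℙ ≤ ENNReal.ofReal (C * (y - x) ^ s))
    (hs : 0 ≤ s) (x y : ℕ → ℝ) (hxy : ∀ n, a ≤ x n ∧ x n ≤ y n ∧ y n ≤ b) :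
    ∫⁻ ω, ∑' n, M ω (Icc (x n) (y n)) ^ q ∂ℙ ≤
      ENNReal.ofReal C * ∑' n, ENNReal.ofReal (y n - x n) ^ s := by
  rw [lintegral_tsum fun n => ((hmeas _ measurableSet_Icc).pow_const q).aemeasurable,
    ← ENNReal.tsum_mul_left]
  refine ENNReal.tsum_le_tsum fun n => (hmom _ _ (hxy n).1 (hxy n).2.1 (hxy n).2.2).trans ?_
  have hyx : 0 ≤ y n - x n := sub_nonneg.2 (hxy n).2.1
  rw [ENNReal.ofReal_mul' (Real.rpow_nonneg hyx s), ENNReal.ofReal_rpow_of_nonneg hyx hs]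

theorem dim_random_metric_le_general
    {Ω : Type*} [MeasurableSpace Ω] (ℙ : Measure Ω)
    (T : ℝ) (hT : 0 < T)
    (M : Ω → Measure ℝ)
    (hfin : ∀ ω, M ω Set.univ < ⊤)
    (hmeas : ∀ A : Set ℝ, MeasurableSet A → Measurable fun ω => M ω A)
    (q s C : ℝ) (hq : q ∈ Set.Ioc (0 : ℝ) 1) (hs : 0 < s)
    (hmom : ∀ x y : ℝ, 0 ≤ x → x ≤ y → y ≤ T →
      ∫⁻ ω, (M ω (Set.Icc x y)) ^ q ∂ℙ ≤ ENNReal.ofReal (C * (y - x) ^ s))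
    (K : Set ℝ) (hK : K ⊆ Set.Icc 0 T) (hdim : dimH K < ENNReal.ofReal s) :
    ∀ᵐ ω ∂ℙ,
      dimWith (fun x y => (M ω (Set.Icc (min x y) (max x y))).toReal) K ≤ q := by
  have hK₀ : μH[s] K = 0 := by
    simpa only [Real.coe_toNNReal _ hs.le] using hausdorffMeasure_of_dimH_lt (d := s.toNNReal) hdim
  have hcontent : ∀ᵐ ω ∂ℙ, hContentWith (measureDist (M ω)) q K = 0 := by
    refine ae_eq_zero_of_forall_exists_le_lintegral_le fun ε hε => ?_
    obtain ⟨x, y, hxy, hKxy, hsum⟩ := exists_Icc_cover_tsum_rpow_lt hT.le hs hK hK₀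
      (ε := ε / ENNReal.ofReal C) (by simp [hε])
    refine ⟨fun ω => ∑' n, M ω (Icc (x n) (y n)) ^ q,
      Measurable.tsum fun n => (hmeas _ measurableSet_Icc).pow_const q, fun ω => ?_, ?_⟩
    · have : IsFiniteMeasure (M ω) := ⟨hfin ω⟩
      exact hContentWith_measureDist_le_tsum (M ω) hq.1 hq.2 x y hKxy
    calc ∫⁻ ω, ∑' n, M ω (Icc (x n) (y n)) ^ q ∂ℙ
        ≤ ENNReal.ofReal C * ∑' n, ENNReal.ofReal (y n - x n) ^ s :=
          lintegral_tsum_rpow_measure_Icc_le ℙ M hmeas hmom hs.le x y hxy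
      _ ≤ ENNReal.ofReal C * (ε / ENNReal.ofReal C) := by gcongr
      _ ≤ ε := ENNReal.mul_div_le
  filter_upwards [hcontent] with ω hω
  exact dimWith_le_of_hContentWith_eq_zero hq.1.le hω

/-- **Upper bound on the Hausdorff dimension in the random metric.**
Let `ω ↦ M ω` be a measurable family of finite atomless Borel measures on `[0,T]` on a
probability space `(Ω, ℙ)`, and suppose `E[M([x,y])^q] ≤ C (y-x)^s` for all
`0 ≤ x ≤ y ≤ T`, where `q ∈ (0,1]`, `s > 0`, `C > 0`. If `K ⊆ [0,T]` has Euclidean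
Hausdorff dimension `< s`, then `ℙ`-a.s. the Hausdorff dimension of `K` with respect to
the pseudometric `d_ω(x,y) = M_ω([min(x,y), max(x,y)])` is at most `q`. -/
theorem dim_random_metric_le
    {Ω : Type*} [MeasurableSpace Ω] (ℙ : Measure Ω) [IsProbabilityMeasure ℙ]
    (T : ℝ) (hT : 0 < T)
    (M : Ω → Measure ℝ)
    (hfin : ∀ ω, M ω Set.univ < ⊤)
    (hsupp : ∀ ω, M ω (Set.Icc 0 T)ᶜ = 0)
    (hatom : ∀ ω, ∀ x : ℝ, M ω {x} = 0)
    (hmeas : ∀ A : Set ℝ, MeasurableSet A → Measurable fun ω => M ω A)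
    (q s C : ℝ) (hq : q ∈ Set.Ioc (0 : ℝ) 1) (hs : 0 < s) (hC : 0 < C)
    (hmom : ∀ x y : ℝ, 0 ≤ x → x ≤ y → y ≤ T →
      ∫⁻ ω, (M ω (Set.Icc x y)) ^ q ∂ℙ ≤ ENNReal.ofReal (C * (y - x) ^ s))
    (K : Set ℝ) (hK : K ⊆ Set.Icc 0 T) (hdim : dimH K < ENNReal.ofReal s) :
    ∀ᵐ ω ∂ℙ,
      dimWith (fun x y => (M ω (Set.Icc (min x y) (max x y))).toReal) K ≤ q :=
  dim_random_metric_le_general ℙ T hT M hfin hmeas q s C hq hs hmom K hK hdim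
end

section
/- Let (Ω, ℱ, ℙ) be a probability space, T > 0, and ω ↦ M_ω a measurable family of finite atomless Borel measures on [0,T]. Let ψ : ℝ → ℝ be convex with ψ(0) = 0, ψ(1) = 0, set ζ(q) = q − ψ(q), and assume ζ(1+ε) > 1 for some ε > 0. Assume that for every q ∈ [0,1] there is a constant C_q > 0 with ∫_Ω M_ω([x,y])^q ℙ(dω) ≤ C_q (y−x)^{ζ(q)} for all 0 ≤ x ≤ y ≤ T. Then for every set K ⊆ [0,T], ℙ-almost surely ζ(dim_H^{d_ω}(K)) ≤ dim_H(K), where dim_H(K) is the Euclidean Hausdorff dimension of K and dim_H^{d_ω}(K) is the Hausdorff dimension of K with respect to the pseudometric d_ω(x,y) = M_ω([min(x,y), max(x,y)]). -/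
open MeasureTheory
open scoped ENNReal

/-!
Fix a rational `p ∈ (0, 1]` with `ζ p > dim_H K`. Then `μH[ζ p] K = 0`, so for every `m` the set
`K` is covered by intervals `Iₘₙ ⊆ [0, T]` with `∑ₙ |Iₘₙ| ^ ζ p < 2⁻ᵐ`, and the moment bound gives
`E [∑ₘ ∑ₙ M(Iₘₙ) ^ p] < ∞`. Hence almost surely `∑ₙ M(Iₘₙ) ^ p → 0`; as `Iₘₙ` lies in the closed
`d_ω`-ball of radius `M(Iₘₙ)` about its left end, the `p`-content of `K` vanishes and
`dim^{d_ω} K ≤ p`. Doing this simultaneously for the countably many such `p`, continuity of `ζ`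
(a convex `ψ` is continuous) gives the claim. Only `p ≤ 1` is needed because
`d_ω(x, y) = |F x - F y|` for the bounded distribution function `F` of `M_ω`, so `K` is covered by
`N` balls of radius `O(1/N)` and `dim^{d_ω} K ≤ 1`.
-/

open Set Filter Topology

section Content

variable {X : Type*} {d : X → X → ℝ} {t : ℝ} {K : Set X}

lemma hContentWith_le (c : ℕ → X) (r : ℕ → ℝ) (hr : ∀ n, 0 < r n)
    (hcov : K ⊆ ⋃ n, {y | d (c n) y < r n}) :
    hContentWith d t K ≤ ∑' n, ENNReal.ofReal (r n ^ t) :=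
  iInf_le_of_le c (iInf_le_of_le r (iInf_le _ ⟨hr, hcov⟩))

lemma exists_pos_tsum_ofReal_rpow_lt (ht : 0 < t) {η : ℝ≥0∞} (hη : η ≠ 0) :
    ∃ ε : ℕ → ℝ, (∀ n, 0 < ε n) ∧ ∑' n, ENNReal.ofReal (ε n ^ t) < η := by
  obtain ⟨δ, hδ, hsum⟩ := ENNReal.exists_pos_sum_of_countable hη ℕ
  refine ⟨fun n => (δ n : ℝ) ^ t⁻¹, fun n => Real.rpow_pos_of_pos (hδ n) _, ?_⟩
  convert hsum using 3 with n
  rw [← Real.rpow_mul (δ n).coe_nonneg, inv_mul_cancel₀ ht.ne', Real.rpow_one,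
    ENNReal.ofReal_coe_nnreal]

lemma hContentWith_le_tsum_of_nonneg (ht : 0 < t) (c : ℕ → X) {r : ℕ → ℝ} (hr : ∀ n, 0 ≤ r n)
    (hcov : K ⊆ ⋃ n, {y | d (c n) y < r n}) :
    hContentWith d t K ≤ ∑' n, ENNReal.ofReal (r n ^ t) := by
  refine ENNReal.le_of_forall_pos_le_add fun η hη _ => ?_
  obtain ⟨ε, hε, hsum⟩ := exists_pos_tsum_ofReal_rpow_lt ht (ENNReal.coe_ne_zero.2 hη.ne')
  have hcov' : K ⊆ ⋃ n, {y | d (c n) y < max (r n) (ε n)} :=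
    hcov.trans <| iUnion_mono fun n y (hy : d (c n) y < r n) => lt_max_of_lt_left hy
  calc hContentWith d t K ≤ ∑' n, ENNReal.ofReal (max (r n) (ε n) ^ t) :=
        hContentWith_le c _ (fun n => lt_max_of_lt_right (hε n)) hcov'
    _ ≤ ∑' n, (ENNReal.ofReal (r n ^ t) + ENNReal.ofReal (ε n ^ t)) := by
        refine ENNReal.tsum_le_tsum fun n => ?_
        rw [Real.rpow_max (hr n) (hε n).le ht.le, ENNReal.ofReal_max]
        exact max_le le_self_add le_add_self
    _ ≤ _ := by
        rw [ENNReal.tsum_add]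
        gcongr

lemma hContentWith_le_tsum_of_closed_cover (ht0 : 0 < t) (ht1 : t ≤ 1) (c : ℕ → X) {r : ℕ → ℝ}
    (hr : ∀ n, 0 ≤ r n) (hcov : K ⊆ ⋃ n, {y | d (c n) y ≤ r n}) :
    hContentWith d t K ≤ ∑' n, ENNReal.ofReal (r n ^ t) := by
  refine ENNReal.le_of_forall_pos_le_add fun η hη _ => ?_
  obtain ⟨ε, hε, hsum⟩ := exists_pos_tsum_ofReal_rpow_lt ht0 (ENNReal.coe_ne_zero.2 hη.ne')
  have hcov' : K ⊆ ⋃ n, {y | d (c n) y < r n + ε n} :=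
    hcov.trans <| iUnion_mono fun n y (hy : d (c n) y ≤ r n) =>
      show d (c n) y < r n + ε n by linarith [hε n]
  calc hContentWith d t K ≤ ∑' n, ENNReal.ofReal ((r n + ε n) ^ t) :=
        hContentWith_le c _ (fun n => add_pos_of_nonneg_of_pos (hr n) (hε n)) hcov'
    _ ≤ ∑' n, (ENNReal.ofReal (r n ^ t) + ENNReal.ofReal (ε n ^ t)) := by
        refine ENNReal.tsum_le_tsum fun n => ?_
        rw [← ENNReal.ofReal_add (Real.rpow_nonneg (hr n) t) (Real.rpow_nonneg (hε n).le t)]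
        exact ENNReal.ofReal_le_ofReal
          (Real.rpow_add_le_add_rpow (hr n) (hε n).le ht0.le ht1)
    _ ≤ _ := by
        rw [ENNReal.tsum_add]
        gcongr

lemma dimWith_nonneg (d : X → X → ℝ) (K : Set X) : 0 ≤ dimWith d K :=
  Real.sInf_nonneg fun _ hx => hx.1

lemma dimWith_le {q : ℝ} (hq : 0 ≤ q) (h : hContentWith d q K = 0) : dimWith d K ≤ q :=
  csInf_le ⟨0, fun _ hx => hx.1⟩ ⟨hq, h⟩

end Content

section AbsSub

variable {X : Type*} [Nonempty X] {f : X → ℝ} {m t : ℝ}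

lemma exists_cover_abs_sub_lt (hf0 : ∀ x, 0 ≤ f x) (hfm : ∀ x, f x ≤ m) (K : Set X) {N : ℕ}
    (hN : 0 < N) : ∃ c : ℕ → X, K ⊆ ⋃ n < N, {y | |f (c n) - f y| < (m + 1) / N} := by
  have hm : 0 < m + 1 := by linarith [hf0 (Classical.arbitrary X), hfm (Classical.arbitrary X)]
  have hNpos : (0 : ℝ) < N := Nat.cast_pos.2 hN
  set slab : X → ℕ := fun y => ⌊N * f y / (m + 1)⌋₊
  have hslab_lt : ∀ y, slab y < N := fun y => by
    refine (Nat.floor_lt (by have := hf0 y; positivity)).2 ?_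
    rw [div_lt_iff₀ hm]
    nlinarith [hfm y]
  have hcenter : ∀ i, ∃ x, ∀ y ∈ K, slab y = i → |f x - f y| < (m + 1) / N := by
    intro i
    by_cases hi : ∃ y ∈ K, slab y = i
    · obtain ⟨x, -, hx⟩ := hi
      refine ⟨x, fun y _ hy => ?_⟩
      have hxy : |N * f x / (m + 1) - N * f y / (m + 1)| < 1 := by
        have hx0 := hf0 x; have hy0 := hf0 y
        refine Int.abs_sub_lt_one_of_floor_eq_floor ?_
        rw [← Int.natCast_floor_eq_floor (by positivity),
          ← Int.natCast_floor_eq_floor (by positivity)]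
        exact congrArg _ (hx.trans hy.symm)
      rw [← sub_div, ← mul_sub, abs_div, abs_mul, abs_of_pos hNpos, abs_of_pos hm,
        div_lt_one hm] at hxy
      rw [lt_div_iff₀ hNpos]
      linarith
    · exact ⟨Classical.arbitrary X, fun y hyK hy => absurd ⟨y, hyK, hy⟩ hi⟩
  choose c hc using hcenter
  exact ⟨c, fun y hy => mem_biUnion (hslab_lt y) (hc _ y hy rfl)⟩

lemma hContentWith_abs_sub_le (hf0 : ∀ x, 0 ≤ f x) (hfm : ∀ x, f x ≤ m) (ht : 0 < t) (K : Set X)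
    {N : ℕ} (hN : 0 < N) :
    hContentWith (fun x y => |f x - f y|) t K ≤ N * ENNReal.ofReal (((m + 1) / N) ^ t) := by
  obtain ⟨c, hc⟩ := exists_cover_abs_sub_lt hf0 hfm K hN
  set r : ℕ → ℝ := fun n => if n < N then (m + 1) / N else 0
  have hm : 0 ≤ m + 1 := by linarith [hf0 (Classical.arbitrary X), hfm (Classical.arbitrary X)]
  have hr : ∀ n, 0 ≤ r n := fun n => by
    simp only [r]; split_ifs <;> positivity
  have hcov : K ⊆ ⋃ n, {y | |f (c n) - f y| < r n} := fun y hy => by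
    obtain ⟨n, hn, hyn⟩ := mem_iUnion₂.1 (hc hy)
    exact mem_iUnion.2 ⟨n, by simpa [r, hn] using hyn⟩
  refine (hContentWith_le_tsum_of_nonneg ht c hr hcov).trans_eq ?_
  rw [tsum_eq_sum (s := Finset.range N) fun n hn => by
      simp [r, Finset.mem_range.not.1 hn, Real.zero_rpow ht.ne'],
    Finset.sum_congr rfl fun n hn => show _ = ENNReal.ofReal (((m + 1) / N) ^ t) by
      simp only [r, if_pos (Finset.mem_range.1 hn)],
    Finset.sum_const, Finset.card_range, nsmul_eq_mul]

lemma hContentWith_abs_sub_eq_zero (hf0 : ∀ x, 0 ≤ f x) (hfm : ∀ x, f x ≤ m) (ht : 1 < t)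
    (K : Set X) : hContentWith (fun x y => |f x - f y|) t K = 0 := by
  have hm : 0 ≤ m + 1 := by linarith [hf0 (Classical.arbitrary X), hfm (Classical.arbitrary X)]
  have hbound : ∀ N : ℕ, 0 < N →
      hContentWith (fun x y => |f x - f y|) t K ≤ ENNReal.ofReal ((m + 1) ^ t * N ^ (1 - t)) := by
    intro N hN
    have hNpos : (0 : ℝ) < N := Nat.cast_pos.2 hN
    refine (hContentWith_abs_sub_le hf0 hfm (by linarith) K hN).trans_eq ?_
    rw [← ENNReal.ofReal_natCast, ← ENNReal.ofReal_mul (Nat.cast_nonneg N),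
      Real.div_rpow hm hNpos.le, Real.rpow_sub hNpos, Real.rpow_one]
    ring_nf
  have hlim : Tendsto (fun N : ℕ => ENNReal.ofReal ((m + 1) ^ t * N ^ (1 - t))) atTop (𝓝 0) := by
    have h := ((tendsto_rpow_neg_atTop (by linarith : 0 < t - 1)).comp
      tendsto_natCast_atTop_atTop).const_mul ((m + 1) ^ t)
    rw [mul_zero] at h
    simpa [Function.comp_def, neg_sub] using ENNReal.tendsto_ofReal h
  exact le_antisymm (ge_of_tendsto hlim (eventually_atTop.2 ⟨1, hbound⟩)) bot_le

lemma dimWith_abs_sub_le_one (hf0 : ∀ x, 0 ≤ f x) (hfm : ∀ x, f x ≤ m) (K : Set X) :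
    dimWith (fun x y => |f x - f y|) K ≤ 1 :=
  le_of_forall_gt_imp_ge_of_dense fun _ ht =>
    dimWith_le (by linarith) (hContentWith_abs_sub_eq_zero hf0 hfm ht K)

end AbsSub

section MeasureDistance

variable (μ : Measure ℝ) [IsFiniteMeasure μ] [NullSingletonClass μ]

lemma measureReal_Icc_min_max (x y : ℝ) :
    μ.real (Icc (min x y) (max x y)) = |μ.real (Iic x) - μ.real (Iic y)| := by
  wlog h : x ≤ y generalizing x y
  · rw [min_comm, max_comm, abs_sub_comm]
    exact this y x (le_of_not_ge h)
  rw [min_eq_left h, max_eq_right h, ← measureReal_congr Ioc_ae_eq_Icc, ← Iic_sdiff_Iic,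
    measureReal_sdiff (Iic_subset_Iic.2 h) measurableSet_Iic, abs_sub_comm,
    abs_of_nonneg (sub_nonneg.2 (measureReal_mono (Iic_subset_Iic.2 h)))]

lemma dimWith_measure_le_one (K : Set ℝ) :
    dimWith (fun x y => (μ (Icc (min x y) (max x y))).toReal) K ≤ 1 := by
  have hd : (fun x y => (μ (Icc (min x y) (max x y))).toReal) =
      fun x y => |μ.real (Iic x) - μ.real (Iic y)| :=
    funext₂ (measureReal_Icc_min_max μ)
  rw [hd]
  exact dimWith_abs_sub_le_one (fun _ => measureReal_nonneg)
    (fun _ => measureReal_mono (subset_univ _)) K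

end MeasureDistance

lemma Continuous.le_of_forall_rat_mem_Ioo_le {α : Type*} [TopologicalSpace α] [LinearOrder α]
    [OrderClosedTopology α] {g : ℝ → α} (hg : Continuous g) {a x : ℝ} (hax : a < x) {D : α}
    (h : ∀ p : ℚ, a < p → (p : ℝ) < x → g p ≤ D) : g x ≤ D := by
  by_contra! hlt
  have hnear : ∀ᶠ y in 𝓝[<] x, D < g y :=
    nhdsWithin_le_nhds ((isOpen_lt continuous_const hg).mem_nhds hlt)
  obtain ⟨l, hlx, hl⟩ := mem_nhdsLT_iff_exists_Ioo_subset.1 hnear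
  obtain ⟨p, hp, hpx⟩ := exists_rat_btwn (max_lt hlx hax)
  exact (h p ((le_max_right _ _).trans_lt hp) hpx).not_gt (hl ⟨(le_max_left _ _).trans_lt hp, hpx⟩)

lemma exists_Icc_superset_ofReal_sub_le_ediam {T : ℝ} (hT : 0 ≤ T) {V : Set ℝ}
    (hV : V ⊆ Icc 0 T) :
    ∃ a b, 0 ≤ a ∧ a ≤ b ∧ b ≤ T ∧ V ⊆ Icc a b ∧ ENNReal.ofReal (b - a) ≤ Metric.ediam V := by
  rcases V.eq_empty_or_nonempty with rfl | hne
  · exact ⟨0, 0, le_rfl, le_rfl, hT, empty_subset _, by simp⟩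
  have hbdd : Bornology.IsBounded V := (Metric.isBounded_Icc 0 T).subset hV
  exact ⟨sInf V, sSup V, le_csInf hne fun x hx => (hV hx).1,
    Real.sInf_le_sSup V hbdd.bddBelow hbdd.bddAbove, csSup_le hne fun x hx => (hV hx).2,
    hbdd.subset_Icc_sInf_sSup, (Real.ediam_eq hbdd).ge⟩

lemma exists_Icc_cover_of_hausdorffMeasure_eq_zero {T s : ℝ} (hT : 0 ≤ T) (hs : 0 < s)
    {K : Set ℝ} (hK : K ⊆ Icc 0 T) (hH : μH[s] K = 0) {δ : ℝ≥0∞} (hδ : δ ≠ 0) :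
    ∃ a b : ℕ → ℝ, (∀ n, 0 ≤ a n ∧ a n ≤ b n ∧ b n ≤ T) ∧ K ⊆ ⋃ n, Icc (a n) (b n) ∧
      ∑' n, ENNReal.ofReal (b n - a n) ^ s < δ := by
  rw [Measure.hausdorffMeasure_apply] at hH
  simp only [ENNReal.iSup_eq_zero] at hH
  have hlt := (hH 1 one_pos).trans_lt (pos_iff_ne_zero.2 hδ)
  simp only [iInf_lt_iff] at hlt
  obtain ⟨U, hU, -, hsum⟩ := hlt
  choose a b ha hab hb hsub hdiam using fun n =>
    exists_Icc_superset_ofReal_sub_le_ediam hT (inter_subset_right : U n ∩ Icc 0 T ⊆ _)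
  refine ⟨a, b, fun n => ⟨ha n, hab n, hb n⟩, fun y hy => ?_, hsum.trans_le' ?_⟩
  · obtain ⟨n, hn⟩ := mem_iUnion.1 (hU hy)
    exact mem_iUnion.2 ⟨n, hsub n ⟨hn, hK hy⟩⟩
  refine ENNReal.tsum_le_tsum fun n => ?_
  rcases (U n).eq_empty_or_nonempty with hUn | hUn
  · have : ENNReal.ofReal (b n - a n) = 0 := le_antisymm ((hdiam n).trans (by simp [hUn])) bot_le
    rw [this, ENNReal.zero_rpow_of_pos hs]
    exact bot_le
  · rw [iSup_pos hUn]
    exact ENNReal.rpow_le_rpow ((hdiam n).trans (Metric.ediam_mono inter_subset_left)) hs.le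

lemma ae_tendsto_zero_of_tsum_lintegral_ne_top {Ω : Type*} [MeasurableSpace Ω] {ℙ : Measure Ω}
    {S : ℕ → Ω → ℝ≥0∞} (hS : ∀ m, AEMeasurable (S m) ℙ) (h : ∑' m, ∫⁻ ω, S m ω ∂ℙ ≠ ∞) :
    ∀ᵐ ω ∂ℙ, Tendsto (fun m => S m ω) atTop (𝓝 0) := by
  rw [← lintegral_tsum hS] at h
  filter_upwards [ae_lt_top' (AEMeasurable.tsum hS) h] with ω hω
  exact ENNReal.tendsto_atTop_zero_of_tsum_ne_top hω.ne

lemma hContentWith_le_tsum_measure_Icc (μ : Measure ℝ) [IsFiniteMeasure μ] {q : ℝ} (hq0 : 0 < q)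
    (hq1 : q ≤ 1) {K : Set ℝ} {a b : ℕ → ℝ} (hcov : K ⊆ ⋃ n, Icc (a n) (b n)) :
    hContentWith (fun x y => (μ (Icc (min x y) (max x y))).toReal) q K ≤
      ∑' n, μ (Icc (a n) (b n)) ^ q := by
  have hcov' : K ⊆ ⋃ n, {y | (μ (Icc (min (a n) y) (max (a n) y))).toReal ≤
      (μ (Icc (a n) (b n))).toReal} := fun y hy => by
    obtain ⟨n, hn⟩ := mem_iUnion.1 (hcov hy)
    refine mem_iUnion.2 ⟨n, ?_⟩
    show (μ (Icc (min (a n) y) (max (a n) y))).toReal ≤ _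
    rw [min_eq_left hn.1, max_eq_right hn.1]
    exact ENNReal.toReal_mono (measure_ne_top _ _) (measure_mono (Icc_subset_Icc_right hn.2))
  refine (hContentWith_le_tsum_of_closed_cover hq0 hq1 a (fun n => ENNReal.toReal_nonneg)
    hcov').trans_eq (tsum_congr fun n => ?_)
  rw [← ENNReal.ofReal_rpow_of_nonneg ENNReal.toReal_nonneg hq0.le,
    ENNReal.ofReal_toReal (measure_ne_top _ _)]

lemma ae_hContentWith_eq_zero {Ω : Type*} [MeasurableSpace Ω] (ℙ : Measure Ω) {T : ℝ}
    (hT : 0 ≤ T) (M : Ω → Measure ℝ) (hfin : ∀ ω, M ω univ < ⊤)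
    (hmeas : ∀ A : Set ℝ, MeasurableSet A → Measurable fun ω => M ω A)
    {q s C : ℝ} (hq0 : 0 < q) (hq1 : q ≤ 1) (hs : 0 < s)
    (hmom : ∀ x y : ℝ, 0 ≤ x → x ≤ y → y ≤ T →
      ∫⁻ ω, M ω (Icc x y) ^ q ∂ℙ ≤ ENNReal.ofReal (C * (y - x) ^ s))
    {K : Set ℝ} (hK : K ⊆ Icc 0 T) (hH : μH[s] K = 0) :
    ∀ᵐ ω ∂ℙ, hContentWith (fun x y => (M ω (Icc (min x y) (max x y))).toReal) q K = 0 := by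
  choose a b hab hcov hsum using fun m : ℕ =>
    exists_Icc_cover_of_hausdorffMeasure_eq_zero hT hs hK hH
      (pow_ne_zero m (ENNReal.inv_ne_zero.2 ENNReal.ofNat_ne_top) : (2⁻¹ : ℝ≥0∞) ^ m ≠ 0)
  have hmeas_pow : ∀ x y, Measurable fun ω => M ω (Icc x y) ^ q := fun x y =>
    (hmeas _ measurableSet_Icc).pow_const q
  set S : ℕ → Ω → ℝ≥0∞ := fun m ω => ∑' n, M ω (Icc (a m n) (b m n)) ^ q
  have hS_int : ∀ m, ∫⁻ ω, S m ω ∂ℙ ≤ ENNReal.ofReal C * 2⁻¹ ^ m := by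
    intro m
    have hterm : ∀ n, ∫⁻ ω, M ω (Icc (a m n) (b m n)) ^ q ∂ℙ ≤
        ENNReal.ofReal C * ENNReal.ofReal (b m n - a m n) ^ s := fun n => by
      obtain ⟨ha, hab, hb⟩ := hab m n
      rw [ENNReal.ofReal_rpow_of_nonneg (sub_nonneg.2 hab) hs.le,
        ← ENNReal.ofReal_mul' (Real.rpow_nonneg (sub_nonneg.2 hab) s)]
      exact hmom _ _ ha hab hb
    calc ∫⁻ ω, S m ω ∂ℙ
        = ∑' n, ∫⁻ ω, M ω (Icc (a m n) (b m n)) ^ q ∂ℙ :=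
          lintegral_tsum fun n => (hmeas_pow _ _).aemeasurable
      _ ≤ ∑' n, ENNReal.ofReal C * ENNReal.ofReal (b m n - a m n) ^ s :=
          ENNReal.tsum_le_tsum hterm
      _ ≤ ENNReal.ofReal C * 2⁻¹ ^ m := by
          rw [ENNReal.tsum_mul_left]
          gcongr
          exact (hsum m).le
  have hS_sum : ∑' m, ∫⁻ ω, S m ω ∂ℙ ≠ ∞ := by
    refine ne_top_of_le_ne_top ?_ (ENNReal.tsum_le_tsum hS_int)
    rw [ENNReal.tsum_mul_left, ENNReal.tsum_geometric, ENNReal.one_sub_inv_two, inv_inv]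
    exact ENNReal.mul_ne_top ENNReal.ofReal_ne_top ENNReal.ofNat_ne_top
  have hS_meas : ∀ m, AEMeasurable (S m) ℙ := fun m =>
    (Measurable.tsum fun n => hmeas_pow _ _).aemeasurable
  filter_upwards [ae_tendsto_zero_of_tsum_lintegral_ne_top hS_meas hS_sum] with ω hω
  have : IsFiniteMeasure (M ω) := ⟨hfin ω⟩
  exact le_antisymm (ge_of_tendsto' hω fun m =>
    hContentWith_le_tsum_measure_Icc (M ω) hq0 hq1 (hcov m)) bot_le

lemma ae_dimWith_le_of_dimH_lt {Ω : Type*} [MeasurableSpace Ω] (ℙ : Measure Ω) {T : ℝ}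
    (hT : 0 ≤ T) (M : Ω → Measure ℝ) (hfin : ∀ ω, M ω univ < ⊤)
    (hmeas : ∀ A : Set ℝ, MeasurableSet A → Measurable fun ω => M ω A)
    {q s C : ℝ} (hq0 : 0 < q) (hq1 : q ≤ 1)
    (hmom : ∀ x y : ℝ, 0 ≤ x → x ≤ y → y ≤ T →
      ∫⁻ ω, M ω (Icc x y) ^ q ∂ℙ ≤ ENNReal.ofReal (C * (y - x) ^ s))
    {K : Set ℝ} (hK : K ⊆ Icc 0 T) (hKs : dimH K < ENNReal.ofReal s) :
    ∀ᵐ ω ∂ℙ, dimWith (fun x y => (M ω (Icc (min x y) (max x y))).toReal) K ≤ q := by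
  have hs : 0 < s := ENNReal.ofReal_pos.1 (hKs.trans_le' bot_le)
  have hH : μH[s] K = 0 := by
    simpa [Real.coe_toNNReal _ hs.le] using hausdorffMeasure_of_dimH_lt (d := s.toNNReal) hKs
  filter_upwards [ae_hContentWith_eq_zero ℙ hT M hfin hmeas hq0 hq1 hs hmom hK hH] with ω hω
  exact dimWith_le hq0.le hω

theorem zeta_dim_random_metric_le_dimH_general
    {Ω : Type*} [MeasurableSpace Ω] (ℙ : Measure Ω)
    (T : ℝ) (hT : 0 < T)
    (M : Ω → Measure ℝ)
    (hfin : ∀ ω, M ω Set.univ < ⊤)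
    (hatom : ∀ ω, ∀ x : ℝ, M ω {x} = 0)
    (hmeas : ∀ A : Set ℝ, MeasurableSet A → Measurable fun ω => M ω A)
    (ψ : ℝ → ℝ) (hconv : ConvexOn ℝ Set.univ ψ) (hψ0 : ψ 0 = 0)
    (ζ : ℝ → ℝ) (hζ : ∀ q, ζ q = q - ψ q)
    (hmom : ∀ q ∈ Set.Icc (0 : ℝ) 1, ∃ C > 0, ∀ x y : ℝ, 0 ≤ x → x ≤ y → y ≤ T →
      ∫⁻ ω, (M ω (Set.Icc x y)) ^ q ∂ℙ ≤ ENNReal.ofReal (C * (y - x) ^ ζ q)) :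
    ∀ K : Set ℝ, K ⊆ Set.Icc 0 T →
      ∀ᵐ ω ∂ℙ,
        ENNReal.ofReal
            (ζ (dimWith (fun x y => (M ω (Set.Icc (min x y) (max x y))).toReal) K))
          ≤ dimH K := by
  intro K hK
  have hζ_cont : Continuous ζ := by
    rw [show ζ = fun q => q - ψ q from funext hζ]
    exact continuous_id.sub (continuousOn_univ.1 (hconv.continuousOn isOpen_univ))
  have hdim : ∀ᵐ ω ∂ℙ,
      ∀ p : {p : ℚ // 0 < (p : ℝ) ∧ (p : ℝ) ≤ 1 ∧ dimH K < ENNReal.ofReal (ζ p)},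
        dimWith (fun x y => (M ω (Icc (min x y) (max x y))).toReal) K ≤ p := by
    refine ae_all_iff.2 fun ⟨p, hp0, hp1, hpK⟩ => ?_
    obtain ⟨C, -, hC⟩ := hmom p ⟨hp0.le, hp1⟩
    exact ae_dimWith_le_of_dimH_lt ℙ hT.le M hfin hmeas hp0 hp1 hC hK hpK
  filter_upwards [hdim] with ω hω
  have : IsFiniteMeasure (M ω) := ⟨hfin ω⟩
  have : NullSingletonClass (M ω) := ⟨hatom ω⟩
  set x := dimWith (fun x y => (M ω (Icc (min x y) (max x y))).toReal) K
  have hx1 : x ≤ 1 := dimWith_measure_le_one (M ω) K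
  obtain hx0 | hx0 : 0 = x ∨ 0 < x := (dimWith_nonneg _ _).eq_or_lt
  · rw [← hx0, hζ, hψ0, sub_zero, ENNReal.ofReal_zero]
    exact bot_le
  refine (ENNReal.continuous_ofReal.comp hζ_cont).le_of_forall_rat_mem_Ioo_le hx0
    fun p hp0 hpx => le_of_not_gt fun hpK => ?_
  exact (hω ⟨p, hp0, hpx.le.trans hx1, hpK⟩).not_gt hpx

/-- **Upper half of the KPZ relation.**
Let `ω ↦ M ω` be a measurable family of finite atomless Borel measures on `[0,T]` on a
probability space `(Ω, ℙ)`. Let `ψ` be convex with `ψ(0) = ψ(1) = 0`, `ζ(q) = q - ψ(q)`,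
and `ζ(1+ε) > 1` for some `ε > 0`. If for every `q ∈ [0,1]` there is `C_q > 0` with
`E[M([x,y])^q] ≤ C_q (y-x)^{ζ(q)}` for all `0 ≤ x ≤ y ≤ T`, then for every `K ⊆ [0,T]`,
`ℙ`-a.s. `ζ(dim_H^{d_ω}(K)) ≤ dim_H(K)`, where `d_ω(x,y) = M_ω([min(x,y), max(x,y)])`. -/
theorem zeta_dim_random_metric_le_dimH
    {Ω : Type*} [MeasurableSpace Ω] (ℙ : Measure Ω) [IsProbabilityMeasure ℙ]
    (T : ℝ) (hT : 0 < T)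
    (M : Ω → Measure ℝ)
    (hfin : ∀ ω, M ω Set.univ < ⊤)
    (hsupp : ∀ ω, M ω (Set.Icc 0 T)ᶜ = 0)
    (hatom : ∀ ω, ∀ x : ℝ, M ω {x} = 0)
    (hmeas : ∀ A : Set ℝ, MeasurableSet A → Measurable fun ω => M ω A)
    (ψ : ℝ → ℝ) (hconv : ConvexOn ℝ Set.univ ψ) (hψ0 : ψ 0 = 0) (hψ1 : ψ 1 = 0)
    (ζ : ℝ → ℝ) (hζ : ∀ q, ζ q = q - ψ q)
    (hnd : ∃ ε > 0, ζ (1 + ε) > 1)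
    (hmom : ∀ q ∈ Set.Icc (0 : ℝ) 1, ∃ C > 0, ∀ x y : ℝ, 0 ≤ x → x ≤ y → y ≤ T →
      ∫⁻ ω, (M ω (Set.Icc x y)) ^ q ∂ℙ ≤ ENNReal.ofReal (C * (y - x) ^ ζ q)) :
    ∀ K : Set ℝ, K ⊆ Set.Icc 0 T →
      ∀ᵐ ω ∂ℙ,
        ENNReal.ofReal
            (ζ (dimWith (fun x y => (M ω (Set.Icc (min x y) (max x y))).toReal) K))
          ≤ dimH K :=
  zeta_dim_random_metric_le_dimH_general ℙ T hT M hfin hatom hmeas ψ hconv hψ0 ζ hζ hmom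
end
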